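/- arXiv:2505.08371 — 3 statements merged into one kernel-verified Lean document; each statement's English description precedes it below -/
import Mathlib

section
/- Let μ₁, μ₂ ∈ ℝ, α₁, α₂ > 0, and β₁, β₂ > 0 with β₁ < β₂. Then the ratio x ↦ φ(x; μ₁, α₁, β₁)/φ(x; μ₂, α₂, β₂) of generalized normal densities tends to +∞ as x → +∞ and tends to +∞ as x → −∞. -/
open Filter

/-- The generalized normal density with location `μ`, scale `α`, and shape `β`:
`φ(x; μ, α, β) = (β / (2 α Γ(1/β))) * exp (-(|x - μ| / α) ^ β)`. -/
noncomputable def gnpdf (μ α β x : ℝ) : ℝ :=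
  β / (2 * α * Real.Gamma (1 / β)) * Real.exp (-((|x - μ| / α) ^ β))

/-!
The ratio of the densities is a positive constant times `exp (e₂ x - e₁ x)`, where
`eᵢ x = (|x - μᵢ| / αᵢ) ^ βᵢ`. Since `|x - μ| / α` is comparable to `|x|` in both tails,
`eᵢ x =Θ |x| ^ βᵢ`; hence `e₁ = o(e₂)` when `β₁ < β₂`, and `e₂ - e₁ ~ e₂ → ∞`.
-/

open Asymptotics Real

lemma Filter.Tendsto.atTop_sub_isLittleO {α : Type*} {l : Filter α} {f g : α → ℝ}
    (hg : Tendsto g l atTop) (hfg : f =o[l] g) : Tendsto (fun x => g x - f x) l atTop :=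
  (IsEquivalent.refl.sub_isLittleO hfg).symm.tendsto_atTop hg

lemma isLittleO_rpow_rpow_atTop {p q : ℝ} (hpq : p < q) :
    (fun x : ℝ => x ^ p) =o[atTop] fun x => x ^ q := by
  refine isLittleO_of_tendsto' ?_ ?_
  · filter_upwards [eventually_gt_atTop 0] with x hx hq
    exact absurd hq (rpow_pos_of_pos hx q).ne'
  · refine (tendsto_rpow_neg_atTop (sub_pos.2 hpq)).congr' ?_
    filter_upwards [eventually_gt_atTop 0] with x hx
    rw [← rpow_sub hx, neg_sub]

section Tails

variable {l : Filter ℝ}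

lemma isTheta_rpow_abs_sub_div (hl : Tendsto (fun x => |x|) l atTop) (μ β : ℝ) {α : ℝ}
    (hα : 0 < α) : (fun x => (|x - μ| / α) ^ β) =Θ[l] fun x => |x| ^ β := by
  have hsub : (fun x => x - μ) =Θ[l] fun x => x := by
    simpa only [sub_eq_add_neg] using
      (IsEquivalent.refl.add_const_of_norm_tendsto_atTop (c := -μ) hl).isTheta
  have habs : (fun x => |x - μ|) =Θ[l] fun x => |x| := hsub.norm_left.norm_right
  have hdiv : (fun x => |x - μ| / α) =Θ[l] fun x => |x| := by
    simpa only [div_eq_inv_mul] using habs.const_mul_left (inv_ne_zero hα.ne')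
  exact hdiv.rpow
    (Eventually.of_forall fun x => by positivity) (Eventually.of_forall fun x => abs_nonneg x)

lemma tendsto_rpow_abs_sub_div (hl : Tendsto (fun x => |x|) l atTop) (μ : ℝ) {α β : ℝ}
    (hα : 0 < α) (hβ : 0 < β) : Tendsto (fun x => (|x - μ| / α) ^ β) l atTop := by
  have habs : Tendsto (fun x => |x - μ|) l atTop :=
    tendsto_atTop_mono (fun x => abs_sub_abs_le_abs_sub x μ)
      (tendsto_atTop_add_const_right l (-|μ|) hl)
  exact (tendsto_rpow_atTop hβ).comp (habs.atTop_div_const hα)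

lemma tendsto_rpow_abs_sub_div_sub (hl : Tendsto (fun x => |x|) l atTop) (μ₁ μ₂ : ℝ)
    {α₁ α₂ β₁ β₂ : ℝ} (hα₁ : 0 < α₁) (hα₂ : 0 < α₂) (hβ₂ : 0 < β₂) (hβ : β₁ < β₂) :
    Tendsto (fun x => (|x - μ₂| / α₂) ^ β₂ - (|x - μ₁| / α₁) ^ β₁) l atTop := by
  have hpow : (fun x => |x| ^ β₁) =o[l] fun x => |x| ^ β₂ :=
    (isLittleO_rpow_rpow_atTop hβ).comp_tendsto hl
  exact (tendsto_rpow_abs_sub_div hl μ₂ hα₂ hβ₂).atTop_sub_isLittleO <|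
    (isTheta_rpow_abs_sub_div hl μ₁ β₁ hα₁).isBigO.trans_isLittleO <|
      hpow.trans_isBigO (isTheta_rpow_abs_sub_div hl μ₂ β₂ hα₂).symm.isBigO

lemma gnpdf_div_gnpdf (μ₁ α₁ β₁ μ₂ α₂ β₂ x : ℝ) :
    gnpdf μ₁ α₁ β₁ x / gnpdf μ₂ α₂ β₂ x =
      β₁ / (2 * α₁ * Gamma (1 / β₁)) / (β₂ / (2 * α₂ * Gamma (1 / β₂))) *
        exp ((|x - μ₂| / α₂) ^ β₂ - (|x - μ₁| / α₁) ^ β₁) := by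
  rw [gnpdf, gnpdf, mul_div_mul_comm, ← exp_sub, neg_sub_neg]

lemma tendsto_gnpdf_div_gnpdf (hl : Tendsto (fun x => |x|) l atTop) (μ₁ μ₂ : ℝ)
    {α₁ α₂ β₁ β₂ : ℝ} (hα₁ : 0 < α₁) (hα₂ : 0 < α₂) (hβ₁ : 0 < β₁) (hβ : β₁ < β₂) :
    Tendsto (fun x => gnpdf μ₁ α₁ β₁ x / gnpdf μ₂ α₂ β₂ x) l atTop := by
  have hβ₂ := hβ₁.trans hβ
  have hC : 0 < β₁ / (2 * α₁ * Gamma (1 / β₁)) / (β₂ / (2 * α₂ * Gamma (1 / β₂))) := by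
    have := Gamma_pos_of_pos (one_div_pos.2 hβ₁)
    have := Gamma_pos_of_pos (one_div_pos.2 hβ₂)
    positivity
  exact ((tendsto_exp_atTop.comp (tendsto_rpow_abs_sub_div_sub hl μ₁ μ₂ hα₁ hα₂ hβ₂ hβ)
    ).const_mul_atTop hC).congr fun x => (gnpdf_div_gnpdf μ₁ α₁ β₁ μ₂ α₂ β₂ x).symm

end Tails

theorem gnpdf_ratio_tendsto_atTop_of_shape_lt_general
    (μ₁ μ₂ α₁ α₂ β₁ β₂ : ℝ) (hα₁ : 0 < α₁) (hα₂ : 0 < α₂)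
    (hβ₁ : 0 < β₁) (hβ : β₁ < β₂) :
    Tendsto (fun x => gnpdf μ₁ α₁ β₁ x / gnpdf μ₂ α₂ β₂ x) atTop atTop ∧
    Tendsto (fun x => gnpdf μ₁ α₁ β₁ x / gnpdf μ₂ α₂ β₂ x) atBot atTop :=
  ⟨tendsto_gnpdf_div_gnpdf tendsto_abs_atTop_atTop μ₁ μ₂ hα₁ hα₂ hβ₁ hβ,
    tendsto_gnpdf_div_gnpdf tendsto_abs_atBot_atTop μ₁ μ₂ hα₁ hα₂ hβ₁ hβ⟩

/-- If `β₁ < β₂`, the ratio of generalized normal densities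
`x ↦ φ(x; μ₁, α₁, β₁) / φ(x; μ₂, α₂, β₂)` tends to `+∞` in both tails. -/
theorem gnpdf_ratio_tendsto_atTop_of_shape_lt
    (μ₁ μ₂ α₁ α₂ β₁ β₂ : ℝ) (hα₁ : 0 < α₁) (hα₂ : 0 < α₂)
    (hβ₁ : 0 < β₁) (hβ₂ : 0 < β₂) (hβ : β₁ < β₂) :
    Tendsto (fun x => gnpdf μ₁ α₁ β₁ x / gnpdf μ₂ α₂ β₂ x) atTop atTop ∧
    Tendsto (fun x => gnpdf μ₁ α₁ β₁ x / gnpdf μ₂ α₂ β₂ x) atBot atTop :=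
  gnpdf_ratio_tendsto_atTop_of_shape_lt_general μ₁ μ₂ α₁ α₂ β₁ β₂ hα₁ hα₂ hβ₁ hβ
end

section
/- Let μ₁, μ₂ ∈ ℝ, α₁, α₂ > 0, and β₁, β₂ > 0, and suppose that either β₁ ≠ β₂, or β₁ = β₂ and α₁ ≠ α₂. Then the density ratio r(x) = φ(x; μ₁, α₁, β₁)/φ(x; μ₂, α₂, β₂) is non-monotonic: there exist points x₀ < x₁ < x₂ such that (r(x₀) − r(x₁)) · (r(x₁) − r(x₂)) < 0. -/
open Filter Real Topology

def NonMonotonic {α : Type*} [Preorder α] (f : α → ℝ) : Prop :=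
  ∃ x₀ x₁ x₂, x₀ < x₁ ∧ x₁ < x₂ ∧ (f x₀ - f x₁) * (f x₁ - f x₂) < 0

section NonMonotonic

variable {α : Type*} [Preorder α] {f : α → ℝ}

theorem nonMonotonic_neg : NonMonotonic (-f) ↔ NonMonotonic f := by
  have h (a b c : ℝ) : (-a - -b) * (-b - -c) = (a - b) * (b - c) := by ring
  simp only [NonMonotonic, Pi.neg_apply, h]

theorem NonMonotonic.comp_strictMono {φ : ℝ → ℝ} (hf : NonMonotonic f) (hφ : StrictMono φ) :
    NonMonotonic (φ ∘ f) := by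
  obtain ⟨x₀, x₁, x₂, h₀₁, h₁₂, hneg⟩ := hf
  refine ⟨x₀, x₁, x₂, h₀₁, h₁₂, ?_⟩
  simpa only [Function.comp_apply, mul_neg_iff, sub_pos, sub_neg, hφ.lt_iff_lt] using hneg

end NonMonotonic

theorem nonMonotonic_of_tendsto_atBot_atTop {α : Type*} [LinearOrder α] [Nonempty α]
    [NoMinOrder α] [NoMaxOrder α] {f : α → ℝ}
    (hbot : Tendsto f atBot atTop) (htop : Tendsto f atTop atTop) : NonMonotonic f := by
  obtain ⟨x₁⟩ := ‹Nonempty α›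
  obtain ⟨x₀, hx₀, hfx₀⟩ := ((eventually_lt_atBot x₁).and (hbot.eventually_gt_atTop (f x₁))).exists
  obtain ⟨x₂, hx₂, hfx₂⟩ := ((eventually_gt_atTop x₁).and (htop.eventually_gt_atTop (f x₁))).exists
  exact ⟨x₀, x₁, x₂, hx₀, hx₂, mul_neg_of_pos_of_neg (by linarith) (by linarith)⟩

theorem tendsto_mul_rpow_sub_mul_add_rpow_atTop {a b d p q : ℝ} (hb : 0 < b) (hq : 0 < q)
    (h : p < q ∨ (p = q ∧ a < b)) :
    Tendsto (fun s => b * s ^ q - a * (s + d) ^ p) atTop atTop := by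
  -- `b * s ^ q - a * (s + d) ^ p = s ^ q * (b - a * ((1 + d / s) ^ p * s ^ (p - q)))`, and the
  -- second factor tends to `b - a * L > 0`.
  have hratio : Tendsto (fun s => (1 + d / s) ^ p) atTop (𝓝 1) := by
    have h1 : Tendsto (fun s => 1 + d / s) atTop (𝓝 1) := by
      simpa using tendsto_const_nhds.add ((tendsto_const_nhds (x := d)).div_atTop tendsto_id)
    simpa using h1.rpow_const (Or.inl one_ne_zero)
  obtain ⟨L, hL, haL⟩ : ∃ L, Tendsto (fun s : ℝ => s ^ (p - q)) atTop (𝓝 L) ∧ a * L < b := by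
    rcases h with hpq | ⟨rfl, hab⟩
    · refine ⟨0, ?_, by simpa using hb⟩
      simpa using tendsto_rpow_neg_atTop (sub_pos.2 hpq)
    · exact ⟨1, by simp, by simpa using hab⟩
  have hfactor := tendsto_const_nhds (x := b) |>.sub ((hratio.mul hL).const_mul a)
  refine (Tendsto.atTop_mul_pos (by linarith) (tendsto_rpow_atTop hq) hfactor).congr' ?_
  filter_upwards [eventually_gt_atTop 0, eventually_gt_atTop (-d)] with s hs hsd
  rw [one_add_div hs.ne', div_rpow (by linarith) hs.le, rpow_sub hs]
  field_simp

theorem tendsto_mul_abs_sub_rpow_sub_mul_abs_sub_rpow {l : Filter ℝ} {a b m n p q : ℝ}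
    (hl : Tendsto (fun x => |x - n|) l atTop) (ha : 0 ≤ a) (hb : 0 < b) (hp : 0 ≤ p) (hq : 0 < q)
    (h : p < q ∨ (p = q ∧ a < b)) :
    Tendsto (fun x => b * |x - n| ^ q - a * |x - m| ^ p) l atTop := by
  refine tendsto_atTop_mono (fun x => ?_)
    ((tendsto_mul_rpow_sub_mul_add_rpow_atTop (d := |n - m|) hb hq h).comp hl)
  dsimp only [Function.comp_apply]
  gcongr
  exact abs_sub_le x n m

theorem nonMonotonic_mul_abs_sub_rpow_sub_of_lt {a b m n p q : ℝ} (ha : 0 ≤ a) (hb : 0 < b)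
    (hp : 0 ≤ p) (hq : 0 < q) (h : p < q ∨ (p = q ∧ a < b)) :
    NonMonotonic (fun x => b * |x - n| ^ q - a * |x - m| ^ p) := by
  exact nonMonotonic_of_tendsto_atBot_atTop
    (tendsto_mul_abs_sub_rpow_sub_mul_abs_sub_rpow
      (tendsto_abs_atBot_atTop.comp (tendsto_atBot_add_const_right _ _ tendsto_id)) ha hb hp hq h)
    (tendsto_mul_abs_sub_rpow_sub_mul_abs_sub_rpow
      (tendsto_abs_atTop_atTop.comp (tendsto_atTop_add_const_right _ _ tendsto_id)) ha hb hp hq h)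

theorem nonMonotonic_mul_abs_sub_rpow_sub {a b m n p q : ℝ} (ha : 0 < a) (hb : 0 < b)
    (hp : 0 < p) (hq : 0 < q) (hne : p ≠ q ∨ a ≠ b) :
    NonMonotonic (fun x => b * |x - n| ^ q - a * |x - m| ^ p) := by
  suffices (p < q ∨ (p = q ∧ a < b)) ∨ (q < p ∨ (q = p ∧ b < a)) by
    rcases this with h | h
    · exact nonMonotonic_mul_abs_sub_rpow_sub_of_lt ha.le hb hp.le hq h
    · rw [← nonMonotonic_neg]
      convert nonMonotonic_mul_abs_sub_rpow_sub_of_lt (m := n) (n := m) hb.le ha hq.le hp h using 1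
      ext x
      simp
  rcases lt_trichotomy p q with hpq | rfl | hqp
  · exact .inl (.inl hpq)
  · rcases (hne.resolve_left (· rfl)).lt_or_gt with hab | hba
    · exact .inl (.inr ⟨rfl, hab⟩)
    · exact .inr (.inr ⟨rfl, hba⟩)
  · exact .inr (.inl hqp)

theorem exists_pos_gnpdf_div_gnpdf_eq {μ₁ μ₂ α₁ α₂ β₁ β₂ : ℝ} (hα₁ : 0 < α₁) (hα₂ : 0 < α₂)
    (hβ₁ : 0 < β₁) (hβ₂ : 0 < β₂) :
    ∃ C > 0, ∀ x, gnpdf μ₁ α₁ β₁ x / gnpdf μ₂ α₂ β₂ x =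
      C * exp ((α₂ ^ β₂)⁻¹ * |x - μ₂| ^ β₂ - (α₁ ^ β₁)⁻¹ * |x - μ₁| ^ β₁) := by
  have hΓ₁ := Gamma_pos_of_pos (one_div_pos.2 hβ₁)
  have hΓ₂ := Gamma_pos_of_pos (one_div_pos.2 hβ₂)
  refine ⟨β₁ / (2 * α₁ * Gamma (1 / β₁)) / (β₂ / (2 * α₂ * Gamma (1 / β₂))), by positivity,
    fun x => ?_⟩
  rw [gnpdf, gnpdf, mul_div_mul_comm, ← exp_sub, div_rpow (abs_nonneg _) hα₁.le,
    div_rpow (abs_nonneg _) hα₂.le]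
  ring_nf

/-- If two generalized normal densities differ in shape, or have equal
shape but different scales, then their ratio is non-monotonic. -/
theorem gnpdf_ratio_nonMonotonic_of_shape_or_scale_ne
    (μ₁ μ₂ α₁ α₂ β₁ β₂ : ℝ) (hα₁ : 0 < α₁) (hα₂ : 0 < α₂)
    (hβ₁ : 0 < β₁) (hβ₂ : 0 < β₂)
    (hne : β₁ ≠ β₂ ∨ (β₁ = β₂ ∧ α₁ ≠ α₂))
    (r : ℝ → ℝ) (hr : ∀ x, r x = gnpdf μ₁ α₁ β₁ x / gnpdf μ₂ α₂ β₂ x) :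
    ∃ x₀ x₁ x₂ : ℝ, x₀ < x₁ ∧ x₁ < x₂ ∧ (r x₀ - r x₁) * (r x₁ - r x₂) < 0 := by
  have hne' : β₁ ≠ β₂ ∨ (α₁ ^ β₁)⁻¹ ≠ (α₂ ^ β₂)⁻¹ := hne.imp_right fun ⟨hβ, hα⟩ => by
    subst hβ
    rwa [Ne, inv_inj, rpow_left_inj hα₁.le hα₂.le hβ₁.ne']
  have hexponent := nonMonotonic_mul_abs_sub_rpow_sub (m := μ₁) (n := μ₂)
    (by positivity) (by positivity) hβ₁ hβ₂ hne'
  obtain ⟨C, hC, hratio⟩ := exists_pos_gnpdf_div_gnpdf_eq (μ₁ := μ₁) (μ₂ := μ₂) hα₁ hα₂ hβ₁ hβ₂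
  obtain rfl : r = (fun t => C * exp t) ∘ _ := funext fun x => (hr x).trans (hratio x)
  exact hexponent.comp_strictMono (exp_strictMono.const_mul hC)
end

section
/- Let f(x) = Σ_{j=1}^{L_f} ω_j^f · φ(x; μ_j^f, α_j^f, β) and g(x) = Σ_{k=1}^{L_g} ω_k^g · φ(x; μ_k^g, α_k^g, β) be finite mixtures of generalized normal densities with a common shape parameter β > 0 and all weights and scales strictly positive. If max_j α_j^f > max_k α_k^g, then f(x)/g(x) → +∞ as x → +∞ and f(x)/g(x) → +∞ as x → −∞. -/
/-!
As `x → +∞`, `(|x - μ| / α) ^ β` grows like `(x / α) ^ β`, so for scales `α' < α` the exponents of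
the two densities differ by a term tending to `+∞`: the density of smaller scale is little-o of
the one of larger scale, whatever the locations. Hence `g` is little-o of the component of `f` of
maximal scale, which is big-O of `f`. The tail at `-∞` follows by the reflection `x ↦ -x`,
`μ ↦ -μ`.
-/

open Filter

open Topology Asymptotics

lemma Asymptotics.IsLittleO.tendsto_div_atTop {α : Type*} {l : Filter α} {f g : α → ℝ}
    (h : g =o[l] f) (hf : ∀ᶠ x in l, 0 < f x) (hg : ∀ᶠ x in l, 0 < g x) :
    Tendsto (fun x => f x / g x) l atTop := by
  have hdiv : Tendsto (fun x => g x / f x) l (𝓝[>] 0) :=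
    tendsto_nhdsWithin_iff.2 ⟨h.tendsto_div_nhds_zero,
      hf.and hg |>.mono fun _ hx => div_pos hx.2 hx.1⟩
  exact hdiv.inv_tendsto_nhdsGT_zero.congr fun x => inv_div _ _

lemma gnpdf_pos {μ α β x : ℝ} (hα : 0 < α) (hβ : 0 < β) : 0 < gnpdf μ α β x := by
  have hΓ : 0 < Real.Gamma (1 / β) := Real.Gamma_pos_of_pos (by positivity)
  unfold gnpdf
  positivity

lemma gnpdf_neg_neg (μ α β x : ℝ) : gnpdf (-μ) α β (-x) = gnpdf μ α β x := by
  rw [gnpdf, gnpdf, neg_sub_neg, abs_sub_comm]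

lemma tendsto_abs_sub_div_rpow_div_rpow_atTop (μ : ℝ) {α : ℝ} (hα : 0 < α) (β : ℝ) :
    Tendsto (fun x => (|x - μ| / α) ^ β / x ^ β) atTop (𝓝 ((1 / α) ^ β)) := by
  have hlim : Tendsto (fun x : ℝ => ((1 - μ / x) / α) ^ β) atTop (𝓝 (((1 - 0) / α) ^ β)) :=
    ((tendsto_const_nhds.sub (tendsto_const_nhds.div_atTop tendsto_id)).div_const α).rpow_const
      (Or.inl (by positivity))
  rw [sub_zero] at hlim
  refine hlim.congr' ?_
  filter_upwards [eventually_gt_atTop 0, eventually_ge_atTop μ] with x hx hμx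
  rw [abs_of_nonneg (sub_nonneg.2 hμx), ← Real.div_rpow (by positivity) hx.le]
  congr 1
  field_simp

lemma tendsto_abs_sub_div_rpow_sub_atTop {μ μ' α α' β : ℝ} (hβ : 0 < β) (hα' : 0 < α')
    (hlt : α' < α) :
    Tendsto (fun x => (|x - μ'| / α') ^ β - (|x - μ| / α) ^ β) atTop atTop := by
  have hα : 0 < α := hα'.trans hlt
  have hC : 0 < (1 / α') ^ β - (1 / α) ^ β :=
    sub_pos.2 (Real.rpow_lt_rpow (by positivity) (one_div_lt_one_div_of_lt hα' hlt) hβ)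
  refine ((tendsto_rpow_atTop hβ).atTop_mul_pos hC
    ((tendsto_abs_sub_div_rpow_div_rpow_atTop μ' hα' β).sub
      (tendsto_abs_sub_div_rpow_div_rpow_atTop μ hα β))).congr' ?_
  filter_upwards [eventually_gt_atTop 0] with x hx
  have : x ^ β ≠ 0 := (Real.rpow_pos_of_pos hx β).ne'
  field_simp

lemma gnpdf_isLittleO_gnpdf {μ μ' α α' β : ℝ} (hβ : 0 < β) (hα' : 0 < α') (hlt : α' < α) :
    gnpdf μ' α' β =o[atTop] gnpdf μ α β := by
  have hα : 0 < α := hα'.trans hlt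
  have hexp : (fun x => Real.exp (-(|x - μ'| / α') ^ β)) =o[atTop]
      (fun x => Real.exp (-(|x - μ| / α) ^ β)) :=
    Real.isLittleO_exp_comp_exp_comp.2 <| by
      simpa only [neg_sub_neg] using tendsto_abs_sub_div_rpow_sub_atTop hβ hα' hlt
  have hΓ : 0 < Real.Gamma (1 / β) := Real.Gamma_pos_of_pos (by positivity)
  unfold gnpdf
  exact (hexp.const_mul_left _).const_mul_right (by positivity)

noncomputable def gnMixture {ι : Type*} [Fintype ι] (ω μ α : ι → ℝ) (β x : ℝ) : ℝ :=
  ∑ j, ω j * gnpdf (μ j) (α j) β x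

section gnMixture

variable {ι : Type*} [Fintype ι] {ω μ α : ι → ℝ} {β : ℝ}

lemma gnMixture_neg_neg (ω μ α : ι → ℝ) (β x : ℝ) :
    gnMixture ω (-μ) α β (-x) = gnMixture ω μ α β x := by
  simp only [gnMixture, Pi.neg_apply, gnpdf_neg_neg]

lemma gnMixture_pos [Nonempty ι] (hω : ∀ j, 0 < ω j) (hα : ∀ j, 0 < α j) (hβ : 0 < β) (x : ℝ) :
    0 < gnMixture ω μ α β x :=
  Finset.sum_pos (fun j _ => mul_pos (hω j) (gnpdf_pos (hα j) hβ)) Finset.univ_nonempty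

lemma gnMixture_isLittleO_gnpdf {μ₀ α₀ : ℝ} (hβ : 0 < β) (hα : ∀ j, 0 < α j)
    (hlt : ∀ j, α j < α₀) : gnMixture ω μ α β =o[atTop] gnpdf μ₀ α₀ β := by
  refine (IsLittleO.sum (s := Finset.univ) fun j _ =>
    (gnpdf_isLittleO_gnpdf (μ := μ₀) (μ' := μ j) hβ (hα j) (hlt j)).const_mul_left (ω j)).congr_left
    fun x => ?_
  simp only [gnMixture, Finset.sum_apply]

lemma gnpdf_isBigO_gnMixture (l : Filter ℝ) (hω : ∀ j, 0 < ω j) (hα : ∀ j, 0 < α j)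
    (hβ : 0 < β) (j : ι) : gnpdf (μ j) (α j) β =O[l] gnMixture ω μ α β := by
  refine IsBigO.of_bound (ω j)⁻¹ (Eventually.of_forall fun x => ?_)
  have hterm : ω j * gnpdf (μ j) (α j) β x ≤ gnMixture ω μ α β x :=
    Finset.single_le_sum (fun i _ => (mul_pos (hω i) (gnpdf_pos (hα i) hβ)).le)
      (Finset.mem_univ j)
  have hpos : 0 < gnpdf (μ j) (α j) β x := gnpdf_pos (hα j) hβ
  rw [Real.norm_of_nonneg hpos.le,
    Real.norm_of_nonneg ((mul_pos (hω j) hpos).le.trans hterm), ← div_eq_inv_mul,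
    le_div_iff₀' (hω j)]
  exact hterm

end gnMixture

lemma tendsto_gnMixture_div_gnMixture_atTop {ι κ : Type*} [Fintype ι] [Fintype κ] [Nonempty κ]
    {ωf μf αf : ι → ℝ} {ωg μg αg : κ → ℝ} {β : ℝ} (hβ : 0 < β)
    (hωf : ∀ j, 0 < ωf j) (hαf : ∀ j, 0 < αf j) (hωg : ∀ k, 0 < ωg k) (hαg : ∀ k, 0 < αg k)
    (j₀ : ι) (hlt : ∀ k, αg k < αf j₀) :
    Tendsto (fun x => gnMixture ωf μf αf β x / gnMixture ωg μg αg β x) atTop atTop :=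
  have : Nonempty ι := ⟨j₀⟩
  ((gnMixture_isLittleO_gnpdf hβ hαg hlt).trans_isBigO
      (gnpdf_isBigO_gnMixture atTop hωf hαf hβ j₀)).tendsto_div_atTop
    (.of_forall (gnMixture_pos hωf hαf hβ)) (.of_forall (gnMixture_pos hωg hαg hβ))

theorem mixture_ratio_tendsto_atTop_of_max_scale_gt_general
    (Lf Lg : ℕ) (β : ℝ) (hβ : 0 < β)
    (ωf μf αf : Fin (Lf + 1) → ℝ) (ωg μg αg : Fin (Lg + 1) → ℝ)
    (hωf : ∀ j, 0 < ωf j) (hαf : ∀ j, 0 < αf j)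
    (hωg : ∀ k, 0 < ωg k) (hαg : ∀ k, 0 < αg k)
    (hmax : Finset.univ.sup' Finset.univ_nonempty αg
          < Finset.univ.sup' Finset.univ_nonempty αf) :
    Tendsto (fun x => (∑ j, ωf j * gnpdf (μf j) (αf j) β x)
                    / (∑ k, ωg k * gnpdf (μg k) (αg k) β x)) atTop atTop ∧
    Tendsto (fun x => (∑ j, ωf j * gnpdf (μf j) (αf j) β x)
                    / (∑ k, ωg k * gnpdf (μg k) (αg k) β x)) atBot atTop := by
  obtain ⟨j₀, -, hj₀⟩ := Finset.exists_mem_eq_sup' Finset.univ_nonempty αf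
  have hlt : ∀ k, αg k < αf j₀ := fun k =>
    (Finset.le_sup' αg (Finset.mem_univ k)).trans_lt (hj₀ ▸ hmax)
  have key := fun μf μg =>
    tendsto_gnMixture_div_gnMixture_atTop (μf := μf) (μg := μg) hβ hωf hαf hωg hαg j₀ hlt
  change Tendsto (fun x => gnMixture ωf μf αf β x / gnMixture ωg μg αg β x) atTop atTop ∧
    Tendsto (fun x => gnMixture ωf μf αf β x / gnMixture ωg μg αg β x) atBot atTop
  refine ⟨key μf μg, ?_⟩
  simpa only [Function.comp_def, gnMixture_neg_neg] using
    (key (-μf) (-μg)).comp tendsto_neg_atBot_atTop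

/-- For finite mixtures `f` and `g` of generalized normal densities with
a common shape parameter `β > 0` and strictly positive weights and scales (weights
summing to 1), if the maximal scale of `f` exceeds that of `g`, then `f/g → +∞` in
both tails. -/
theorem mixture_ratio_tendsto_atTop_of_max_scale_gt
    (Lf Lg : ℕ) (β : ℝ) (hβ : 0 < β)
    (ωf μf αf : Fin (Lf + 1) → ℝ) (ωg μg αg : Fin (Lg + 1) → ℝ)
    (hωf : ∀ j, 0 < ωf j) (hαf : ∀ j, 0 < αf j)
    (hωg : ∀ k, 0 < ωg k) (hαg : ∀ k, 0 < αg k)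
    (hsumf : ∑ j, ωf j = 1) (hsumg : ∑ k, ωg k = 1)
    (hmax : Finset.univ.sup' Finset.univ_nonempty αg
          < Finset.univ.sup' Finset.univ_nonempty αf) :
    Tendsto (fun x => (∑ j, ωf j * gnpdf (μf j) (αf j) β x)
                    / (∑ k, ωg k * gnpdf (μg k) (αg k) β x)) atTop atTop ∧
    Tendsto (fun x => (∑ j, ωf j * gnpdf (μf j) (αf j) β x)
                    / (∑ k, ωg k * gnpdf (μg k) (αg k) β x)) atBot atTop :=
  mixture_ratio_tendsto_atTop_of_max_scale_gt_general Lf Lg β hβ ωf μf αf ωg μg αg hωf hαf hωg hαg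
    hmax
end
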